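/- For the magnetogasdynamic pressure with A₁, B₁ > 0, 1 < γ < 3 and γ ≠ 2, the derivative of m(τ) = (A₁γ(3−γ)τ^(−γ−1) + 2B₁τ^(−3))/(A₁γ(γ+1)τ^(−γ−1) + 6B₁τ^(−3)) equals 8B₁A₁γ(γ−2)²τ^(−γ−5) / (A₁γ(γ+1)τ^(−γ−1) + 6B₁τ^(−3))², and in particular m'(τ) > 0 for all τ > 0. -/

import Mathlib

open Real

/-- For `N = a t^p + b t^q` and `D = c t^p + d t^q`, the Wronskian `N' D - N D'` collapses to the
single power `(a d - b c) (p - q) t^(p + q - 1)`. -/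
theorem hasDerivAt_rpow_comb_div_rpow_comb {a b c d p q t : ℝ} (ht : 0 < t)
    (hD : c * t ^ p + d * t ^ q ≠ 0) :
    HasDerivAt (fun s => (a * s ^ p + b * s ^ q) / (c * s ^ p + d * s ^ q))
      ((a * d - b * c) * (p - q) * t ^ (p + q - 1) / (c * t ^ p + d * t ^ q) ^ 2) t := by
  have hp : HasDerivAt (fun s => s ^ p) (p * t ^ (p - 1)) t :=
    hasDerivAt_rpow_const (Or.inl ht.ne')
  have hq : HasDerivAt (fun s => s ^ q) (q * t ^ (q - 1)) t :=
    hasDerivAt_rpow_const (Or.inl ht.ne')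
  refine (((hp.const_mul a).add (hq.const_mul b)).div
    ((hp.const_mul c).add (hq.const_mul d)) hD).congr_deriv ?_
  simp only [Pi.add_apply]
  rw [rpow_sub_one ht.ne', rpow_sub_one ht.ne', rpow_sub_one ht.ne', rpow_add ht]
  field_simp
  ring

theorem stmt_5_general (A₁ B₁ γ : ℝ) (hA : 0 < A₁) (hB : 0 < B₁) (hγ1 : 1 < γ)
    (hγ2 : γ ≠ 2)
    (m : ℝ → ℝ)
    (hm : ∀ τ : ℝ, 0 < τ →
      m τ = (A₁ * γ * (3 - γ) * τ ^ (-γ - 1) + 2 * B₁ * τ ^ (-3 : ℝ)) /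
            (A₁ * γ * (γ + 1) * τ ^ (-γ - 1) + 6 * B₁ * τ ^ (-3 : ℝ))) :
    ∀ τ : ℝ, 0 < τ →
      deriv m τ = 8 * B₁ * A₁ * γ * (γ - 2) ^ 2 * τ ^ (-γ - 5) /
          (A₁ * γ * (γ + 1) * τ ^ (-γ - 1) + 6 * B₁ * τ ^ (-3 : ℝ)) ^ 2 ∧
      0 < deriv m τ := by
  intro τ hτ
  have hγ : 0 < γ := by linarith
  have hD : 0 < A₁ * γ * (γ + 1) * τ ^ (-γ - 1) + 6 * B₁ * τ ^ (-3 : ℝ) := by positivity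
  have hmτ : m =ᶠ[nhds τ] _ := Filter.eventually_of_mem (Ioi_mem_nhds hτ) hm
  have hderiv := (hasDerivAt_rpow_comb_div_rpow_comb hτ hD.ne').congr_of_eventuallyEq hmτ
  rw [show -γ - 1 + -3 - 1 = -γ - 5 by ring] at hderiv
  -- both `a d - b c` and `p - q` carry the factor `2 - γ`
  have hcoeff : (A₁ * γ * (3 - γ) * (6 * B₁) - 2 * B₁ * (A₁ * γ * (γ + 1))) * (-γ - 1 - -3)
      = 8 * B₁ * A₁ * γ * (γ - 2) ^ 2 := by ring
  rw [hderiv.deriv, hcoeff]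
  have hγ2' : γ - 2 ≠ 0 := sub_ne_zero.mpr hγ2
  exact ⟨rfl, by positivity⟩

theorem stmt_5 (A₁ B₁ γ : ℝ) (hA : 0 < A₁) (hB : 0 < B₁) (hγ1 : 1 < γ) (hγ3 : γ < 3)
    (hγ2 : γ ≠ 2)
    (m : ℝ → ℝ)
    (hm : ∀ τ : ℝ, 0 < τ →
      m τ = (A₁ * γ * (3 - γ) * τ ^ (-γ - 1) + 2 * B₁ * τ ^ (-3 : ℝ)) /
            (A₁ * γ * (γ + 1) * τ ^ (-γ - 1) + 6 * B₁ * τ ^ (-3 : ℝ))) :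
    ∀ τ : ℝ, 0 < τ →
      deriv m τ = 8 * B₁ * A₁ * γ * (γ - 2) ^ 2 * τ ^ (-γ - 5) /
          (A₁ * γ * (γ + 1) * τ ^ (-γ - 1) + 6 * B₁ * τ ^ (-3 : ℝ)) ^ 2 ∧
      0 < deriv m τ :=
  stmt_5_general A₁ B₁ γ hA hB hγ1 hγ2 m hm
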